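/- arXiv:2502.20883 — 7 statements merged into one kernel-verified Lean document; each statement's English description precedes it below -/
import Mathlib

section
/- Local mass conservation of the full-rank macro–micro scheme: if the scalar-flux equations and temperature equations of the scheme hold at every cell center and every cell corner (with periodic index arithmetic), then the total discrete mass m^m := Δx·Δy · Σ_{(i,j)} [ (2π/c)(φC^m(i,j) + φK^m(i,j)) + c_ν (TC^m(i,j) + TK^m(i,j)) ] is conserved, i.e. m^{n+1} = m^n. -/
/-!
Summing the scheme over the periodic grid, the flux differences telescope away, since a
shift of the periodic index is a permutation of the grid. What remains, cell by cell, is an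
exchange between radiation and material: the absorption `-σ h` in the scalar-flux equation,
multiplied by `2π/c`, is exactly cancelled by the emission term `2π σ h` of the temperature
equation.
-/

open Finset Real

section Conservation

variable {ι κ : Type*} [Fintype ι] [Fintype κ]

theorem sum_quadrature_flux_difference_eq_zero (w Ωx Ωy : κ → ℝ) (Δx Δy : ℝ)
    (g h : ι → κ → ℝ) (σ σ' τ τ' : Equiv.Perm ι) :
    ∑ p, ∑ ℓ, w ℓ * (Ωx ℓ * ((g (σ p) ℓ - g (σ' p) ℓ) / Δx)
      + Ωy ℓ * ((h (τ p) ℓ - h (τ' p) ℓ) / Δy)) = 0 := by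
  have sum_sub_perm (f : ι → ℝ) (e e' : Equiv.Perm ι) : ∑ p, (f (e p) - f (e' p)) = 0 := by
    rw [sum_sub_distrib, Equiv.sum_comp e f, Equiv.sum_comp e' f, sub_self]
  rw [sum_comm]
  refine sum_eq_zero fun ℓ _ => ?_
  simp only [mul_add, sum_add_distrib, ← mul_sum, ← sum_div,
    sum_sub_perm (g · ℓ) σ σ', sum_sub_perm (h · ℓ) τ τ']
  simp

theorem cell_mass_change_eq {c Δt ε cν σ h₀ h₁ B₀ B₁ T₀ T₁ F : ℝ} (hc : c ≠ 0) (hΔt : Δt ≠ 0)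
    (hflux : ε ^ 2 / (c * Δt) * (h₁ - h₀) + 1 / (c * Δt) * (B₁ - B₀)
        + (1 / (2 * π)) * F = -σ * h₁)
    (htemp : cν / Δt * (T₁ - T₀) = 2 * π * σ * h₁) :
    (2 * π / c) * ((B₁ + ε ^ 2 * h₁) - (B₀ + ε ^ 2 * h₀)) + cν * (T₁ - T₀) = -Δt * F := by
  field_simp at hflux htemp ⊢
  linear_combination hflux + c * htemp

theorem sum_mass_change_eq_zero {c Δt ε a cν : ℝ} (hc : c ≠ 0) (hΔt : Δt ≠ 0)
    {σ h₀ h₁ T₀ T₁ F : ι → ℝ}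
    (hflux : ∀ p, ε ^ 2 / (c * Δt) * (h₁ p - h₀ p)
        + 1 / (c * Δt) * (a * c / (2 * π) * T₁ p ^ 4 - a * c / (2 * π) * T₀ p ^ 4)
        + (1 / (2 * π)) * F p = -σ p * h₁ p)
    (htemp : ∀ p, cν / Δt * (T₁ p - T₀ p) = 2 * π * σ p * h₁ p)
    (hF : ∑ p, F p = 0) :
    ∑ p, ((2 * π / c) * ((a * c / (2 * π) * T₁ p ^ 4 + ε ^ 2 * h₁ p)
        - (a * c / (2 * π) * T₀ p ^ 4 + ε ^ 2 * h₀ p)) + cν * (T₁ p - T₀ p)) = 0 := by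
  rw [sum_congr rfl fun p _ => cell_mass_change_eq hc hΔt (hflux p) (htemp p), ← mul_sum, hF,
    mul_zero]

end Conservation

theorem full_rank_macro_micro_mass_conservation_general
    (Nx Ny Nq : ℕ) [NeZero Nx] [NeZero Ny]
    (Δx Δy Δt ε c a cν : ℝ)
    (hΔt : 0 < Δt)
    (hc : 0 < c)
    (w Ωx Ωy : Fin Nq → ℝ)
    -- unknowns at time levels n (suffix 0) and n+1 (suffix 1)
    (gX1 gY1 : ZMod Nx × ZMod Ny → Fin Nq → ℝ)
    (hC0 hC1 TC0 TC1 hK0 hK1 TK0 TK1 : ZMod Nx × ZMod Ny → ℝ)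
    (σaC σaK : ZMod Nx × ZMod Ny → ℝ)
    -- scalar-flux equation at every cell center
    (hfluxC : ∀ i : ZMod Nx, ∀ j : ZMod Ny,
      ε ^ 2 / (c * Δt) * (hC1 (i, j) - hC0 (i, j))
        + 1 / (c * Δt) *
            (a * c / (2 * π) * (TC1 (i, j)) ^ 4 - a * c / (2 * π) * (TC0 (i, j)) ^ 4)
        + (1 / (2 * π)) * ∑ ℓ : Fin Nq, w ℓ *
            (Ωx ℓ * ((gX1 (i, j) ℓ - gX1 (i - 1, j) ℓ) / Δx)
              + Ωy ℓ * ((gY1 (i, j) ℓ - gY1 (i, j - 1) ℓ) / Δy))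
      = -(σaC (i, j)) * hC1 (i, j))
    -- scalar-flux equation at every cell corner
    (hfluxK : ∀ i : ZMod Nx, ∀ j : ZMod Ny,
      ε ^ 2 / (c * Δt) * (hK1 (i, j) - hK0 (i, j))
        + 1 / (c * Δt) *
            (a * c / (2 * π) * (TK1 (i, j)) ^ 4 - a * c / (2 * π) * (TK0 (i, j)) ^ 4)
        + (1 / (2 * π)) * ∑ ℓ : Fin Nq, w ℓ *
            (Ωx ℓ * ((gY1 (i + 1, j) ℓ - gY1 (i, j) ℓ) / Δx)
              + Ωy ℓ * ((gX1 (i, j + 1) ℓ - gX1 (i, j) ℓ) / Δy))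
      = -(σaK (i, j)) * hK1 (i, j))
    -- temperature equations at every center and corner
    (hTempC : ∀ i : ZMod Nx, ∀ j : ZMod Ny,
      cν / Δt * (TC1 (i, j) - TC0 (i, j)) = 2 * π * σaC (i, j) * hC1 (i, j))
    (hTempK : ∀ i : ZMod Nx, ∀ j : ZMod Ny,
      cν / Δt * (TK1 (i, j) - TK0 (i, j)) = 2 * π * σaK (i, j) * hK1 (i, j)) :
    Δx * Δy * ∑ p : ZMod Nx × ZMod Ny,
        ((2 * π / c) * ((a * c / (2 * π) * (TC1 p) ^ 4 + ε ^ 2 * hC1 p)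
            + (a * c / (2 * π) * (TK1 p) ^ 4 + ε ^ 2 * hK1 p))
          + cν * (TC1 p + TK1 p))
    = Δx * Δy * ∑ p : ZMod Nx × ZMod Ny,
        ((2 * π / c) * ((a * c / (2 * π) * (TC0 p) ^ 4 + ε ^ 2 * hC0 p)
            + (a * c / (2 * π) * (TK0 p) ^ 4 + ε ^ 2 * hK0 p))
          + cν * (TC0 p + TK0 p)) := by
  let shiftX (e : Equiv.Perm (ZMod Nx)) : Equiv.Perm (ZMod Nx × ZMod Ny) :=
    e.prodCongr (Equiv.refl _)
  let shiftY (e : Equiv.Perm (ZMod Ny)) : Equiv.Perm (ZMod Nx × ZMod Ny) :=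
    (Equiv.refl _).prodCongr e
  have hcenter := sum_mass_change_eq_zero hc.ne' hΔt.ne'
    (fun p => hfluxC p.1 p.2) (fun p => hTempC p.1 p.2)
    (sum_quadrature_flux_difference_eq_zero w Ωx Ωy Δx Δy gX1 gY1
      1 (shiftX (Equiv.subRight 1)) 1 (shiftY (Equiv.subRight 1)))
  have hcorner := sum_mass_change_eq_zero hc.ne' hΔt.ne'
    (fun p => hfluxK p.1 p.2) (fun p => hTempK p.1 p.2)
    (sum_quadrature_flux_difference_eq_zero w Ωx Ωy Δx Δy gY1 gX1
      (shiftX (Equiv.addRight 1)) 1 (shiftY (Equiv.addRight 1)) 1)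
  have htotal := congrArg₂ (· + ·) hcenter hcorner
  rw [← sum_add_distrib, add_zero] at htotal
  rw [← sub_eq_zero, ← mul_sub, ← sum_sub_distrib, mul_eq_zero]
  exact Or.inr ((sum_congr rfl fun p _ => by ring).trans htotal)

/-- Local mass conservation of the full-rank macro–micro scheme on a periodic grid:
if the scalar-flux equations and temperature equations of the scheme hold at every
cell center and every cell corner, then the total discrete mass
`m^m = Δx Δy Σ_{(i,j)} [(2π/c)(φC^m + φK^m) + c_ν(TC^m + TK^m)]` is conserved. -/
theorem full_rank_macro_micro_mass_conservation
    (Nx Ny Nq : ℕ) [NeZero Nx] [NeZero Ny]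
    (Δx Δy Δt ε c a cν : ℝ)
    (hΔx : 0 < Δx) (hΔy : 0 < Δy) (hΔt : 0 < Δt)
    (hε : 0 < ε) (hc : 0 < c) (ha : 0 < a) (hcν : 0 < cν)
    (w Ωx Ωy : Fin Nq → ℝ) (hw : ∀ ℓ, 0 ≤ w ℓ)
    -- unknowns at time levels n (suffix 0) and n+1 (suffix 1)
    (gX0 gX1 gY0 gY1 : ZMod Nx × ZMod Ny → Fin Nq → ℝ)
    (hC0 hC1 TC0 TC1 hK0 hK1 TK0 TK1 : ZMod Nx × ZMod Ny → ℝ)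
    (σaC σaK : ZMod Nx × ZMod Ny → ℝ)
    (hσaC : ∀ p, 0 ≤ σaC p) (hσaK : ∀ p, 0 ≤ σaK p)
    -- scalar-flux equation at every cell center
    (hfluxC : ∀ i : ZMod Nx, ∀ j : ZMod Ny,
      ε ^ 2 / (c * Δt) * (hC1 (i, j) - hC0 (i, j))
        + 1 / (c * Δt) *
            (a * c / (2 * π) * (TC1 (i, j)) ^ 4 - a * c / (2 * π) * (TC0 (i, j)) ^ 4)
        + (1 / (2 * π)) * ∑ ℓ : Fin Nq, w ℓ *
            (Ωx ℓ * ((gX1 (i, j) ℓ - gX1 (i - 1, j) ℓ) / Δx)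
              + Ωy ℓ * ((gY1 (i, j) ℓ - gY1 (i, j - 1) ℓ) / Δy))
      = -(σaC (i, j)) * hC1 (i, j))
    -- scalar-flux equation at every cell corner
    (hfluxK : ∀ i : ZMod Nx, ∀ j : ZMod Ny,
      ε ^ 2 / (c * Δt) * (hK1 (i, j) - hK0 (i, j))
        + 1 / (c * Δt) *
            (a * c / (2 * π) * (TK1 (i, j)) ^ 4 - a * c / (2 * π) * (TK0 (i, j)) ^ 4)
        + (1 / (2 * π)) * ∑ ℓ : Fin Nq, w ℓ *
            (Ωx ℓ * ((gY1 (i + 1, j) ℓ - gY1 (i, j) ℓ) / Δx)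
              + Ωy ℓ * ((gX1 (i, j + 1) ℓ - gX1 (i, j) ℓ) / Δy))
      = -(σaK (i, j)) * hK1 (i, j))
    -- temperature equations at every center and corner
    (hTempC : ∀ i : ZMod Nx, ∀ j : ZMod Ny,
      cν / Δt * (TC1 (i, j) - TC0 (i, j)) = 2 * π * σaC (i, j) * hC1 (i, j))
    (hTempK : ∀ i : ZMod Nx, ∀ j : ZMod Ny,
      cν / Δt * (TK1 (i, j) - TK0 (i, j)) = 2 * π * σaK (i, j) * hK1 (i, j)) :
    Δx * Δy * ∑ p : ZMod Nx × ZMod Ny,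
        ((2 * π / c) * ((a * c / (2 * π) * (TC1 p) ^ 4 + ε ^ 2 * hC1 p)
            + (a * c / (2 * π) * (TK1 p) ^ 4 + ε ^ 2 * hK1 p))
          + cν * (TC1 p + TK1 p))
    = Δx * Δy * ∑ p : ZMod Nx × ZMod Ny,
        ((2 * π / c) * ((a * c / (2 * π) * (TC0 p) ^ 4 + ε ^ 2 * hC0 p)
            + (a * c / (2 * π) * (TK0 p) ^ 4 + ε ^ 2 * hK0 p))
          + cν * (TC0 p + TK0 p)) :=
  full_rank_macro_micro_mass_conservation_general Nx Ny Nq Δx Δy Δt ε c a cν hΔt hc w Ωx Ωy gX1 gY1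
    hC0 hC1 TC0 TC1 hK0 hK1 TK0 TK1 σaC σaK hfluxC hfluxK hTempC hTempK
end

section
/- Asymptotic-preserving property of the full-rank macro–micro scheme: assume the formal ε → 0 limit equations of the scheme hold, namely (1) gX^{n+1}(i,j)_ℓ = −(1/σᵗX(i,j)) [ Ω_x^ℓ (BC^n(i+1,j) − BC^n(i,j))/Δx + Ω_y^ℓ (BK^n(i,j) − BK^n(i,j−1))/Δy ] at every x-interface and every ℓ, (2) gY^{n+1}(i,j)_ℓ = −(1/σᵗY(i,j)) [ Ω_x^ℓ (BK^n(i,j) − BK^n(i−1,j))/Δx + Ω_y^ℓ (BC^n(i,j+1) − BC^n(i,j))/Δy ] at every y-interface and every ℓ, (3) at every cell center (1/(cΔt))(BC^{n+1} − BC^n)(i,j) + (1/(2π)) Σ_ℓ w_ℓ [ Ω_x^ℓ (gX^{n+1}(i,j) − gX^{n+1}(i−1,j))_ℓ/Δx + Ω_y^ℓ (gY^{n+1}(i,j) − gY^{n+1}(i,j−1))_ℓ/Δy ] = −σᵃC(i,j) hC^{n+1}(i,j), and (4) (c_ν/Δt)(TC^{n+1} − TC^n)(i,j) = 2π σᵃC(i,j)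 hC^{n+1}(i,j). Then at every cell center (i,j) the discrete Rosseland diffusion equation holds: (c_ν/Δt)(TC^{n+1} − TC^n)(i,j) + (2π/(cΔt))(BC^{n+1} − BC^n)(i,j) = (2π/3) { (1/Δx)[ (1/σᵗX(i,j))(BC^n(i+1,j) − BC^n(i,j))/Δx − (1/σᵗX(i−1,j))(BC^n(i,j) − BC^n(i−1,j))/Δx ] + (1/Δy)[ (1/σᵗY(i,j))(BC^n(i,j+1) − BC^n(i,j))/Δy − (1/σᵗY(i,j−1))(BC^n(i,j) − BC^n(i,j−1))/Δy ] }. -/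
open Finset Real

/-!
Substituting the limit micro equations into the discrete divergence of the scalar-flux
equation turns each summand into a quadratic form in the direction `(Ωx ℓ, Ωy ℓ)`.
The quadrature reproduces the second moments of the sphere, so the mixed terms, which carry
the corner values `BK`, cancel and the pure terms give `2π/3` times the five-point
Rosseland diffusion operator of `BC`. Eliminating `σaC · hC` with the temperature equation
leaves the discrete Rosseland equation.
-/

section Quadrature

variable {ι : Type*} [Fintype ι] {w Ωx Ωy : ι → ℝ} {κ : ℝ}

theorem sum_mul_quadratic_form_of_isotropic
    (hxx : ∑ ℓ, w ℓ * Ωx ℓ ^ 2 = κ) (hyy : ∑ ℓ, w ℓ * Ωy ℓ ^ 2 = κ)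
    (hxy : ∑ ℓ, w ℓ * (Ωx ℓ * Ωy ℓ) = 0) (p q r s : ℝ) :
    ∑ ℓ, w ℓ * (Ωx ℓ * (Ωx ℓ * p + Ωy ℓ * q) + Ωy ℓ * (Ωx ℓ * r + Ωy ℓ * s))
      = κ * (p + s) := by
  have hsplit : ∀ ℓ, w ℓ * (Ωx ℓ * (Ωx ℓ * p + Ωy ℓ * q) + Ωy ℓ * (Ωx ℓ * r + Ωy ℓ * s))
      = w ℓ * Ωx ℓ ^ 2 * p + w ℓ * (Ωx ℓ * Ωy ℓ) * (q + r) + w ℓ * Ωy ℓ ^ 2 * s :=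
    fun ℓ => by ring
  simp only [hsplit, sum_add_distrib, ← sum_mul, hxx, hyy, hxy]
  ring

variable {α β : Type*}

theorem sum_mul_divergence_of_linear_flux [Sub α] [One α] [Sub β] [One β]
    (hxx : ∑ ℓ, w ℓ * Ωx ℓ ^ 2 = κ) (hyy : ∑ ℓ, w ℓ * Ωy ℓ ^ 2 = κ)
    (hxy : ∑ ℓ, w ℓ * (Ωx ℓ * Ωy ℓ) = 0) {Δx Δy : ℝ}
    {gX gY : α × β → ι → ℝ} {uX vX uY vY : α × β → ℝ}
    (hgX : ∀ p ℓ, gX p ℓ = Ωx ℓ * uX p + Ωy ℓ * vX p)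
    (hgY : ∀ p ℓ, gY p ℓ = Ωx ℓ * uY p + Ωy ℓ * vY p) (i : α) (j : β) :
    ∑ ℓ, w ℓ * (Ωx ℓ * ((gX (i, j) ℓ - gX (i - 1, j) ℓ) / Δx)
        + Ωy ℓ * ((gY (i, j) ℓ - gY (i, j - 1) ℓ) / Δy))
      = κ * ((uX (i, j) - uX (i - 1, j)) / Δx + (vY (i, j) - vY (i, j - 1)) / Δy) := by
  rw [← sum_mul_quadratic_form_of_isotropic hxx hyy hxy _
    ((vX (i, j) - vX (i - 1, j)) / Δx) ((uY (i, j) - uY (i, j - 1)) / Δy)]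
  refine sum_congr rfl fun ℓ _ => ?_
  rw [hgX, hgX, hgY, hgY]
  ring

/-- The five-point discretization of `∇ · ((1/σ) ∇ B)` on the staggered grid, with `σX`, `σY`
sampled at the interfaces `(i + 1/2, j)`, `(i, j + 1/2)`. -/
noncomputable def rosselandDiffusion [Add α] [Sub α] [One α] [Add β] [Sub β] [One β]
    (σX σY B : α × β → ℝ) (Δx Δy : ℝ) (i : α) (j : β) : ℝ :=
  (1 / Δx) *
      ((1 / σX (i, j)) * ((B (i + 1, j) - B (i, j)) / Δx)
        - (1 / σX (i - 1, j)) * ((B (i, j) - B (i - 1, j)) / Δx))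
    + (1 / Δy) *
      ((1 / σY (i, j)) * ((B (i, j + 1) - B (i, j)) / Δy)
        - (1 / σY (i, j - 1)) * ((B (i, j) - B (i, j - 1)) / Δy))

theorem sum_mul_divergence_of_limit_flux [AddGroup α] [One α] [AddGroup β] [One β]
    (hxx : ∑ ℓ, w ℓ * Ωx ℓ ^ 2 = κ) (hyy : ∑ ℓ, w ℓ * Ωy ℓ ^ 2 = κ)
    (hxy : ∑ ℓ, w ℓ * (Ωx ℓ * Ωy ℓ) = 0) {Δx Δy : ℝ}
    {gX gY : α × β → ι → ℝ} {σX σY BC BK : α × β → ℝ}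
    (hgX : ∀ i j ℓ, gX (i, j) ℓ = -(1 / σX (i, j)) *
      (Ωx ℓ * ((BC (i + 1, j) - BC (i, j)) / Δx) + Ωy ℓ * ((BK (i, j) - BK (i, j - 1)) / Δy)))
    (hgY : ∀ i j ℓ, gY (i, j) ℓ = -(1 / σY (i, j)) *
      (Ωx ℓ * ((BK (i, j) - BK (i - 1, j)) / Δx) + Ωy ℓ * ((BC (i, j + 1) - BC (i, j)) / Δy)))
    (i : α) (j : β) :
    ∑ ℓ, w ℓ * (Ωx ℓ * ((gX (i, j) ℓ - gX (i - 1, j) ℓ) / Δx)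
        + Ωy ℓ * ((gY (i, j) ℓ - gY (i, j - 1) ℓ) / Δy))
      = -(κ * rosselandDiffusion σX σY BC Δx Δy i j) := by
  rw [sum_mul_divergence_of_linear_flux hxx hyy hxy
    (uX := fun p => -(1 / σX p) * ((BC (p.1 + 1, p.2) - BC p) / Δx))
    (vX := fun p => -(1 / σX p) * ((BK p - BK (p.1, p.2 - 1)) / Δy))
    (uY := fun p => -(1 / σY p) * ((BK p - BK (p.1 - 1, p.2)) / Δx))
    (vY := fun p => -(1 / σY p) * ((BC (p.1, p.2 + 1) - BC p) / Δy))
    (fun ⟨i, j⟩ ℓ => by rw [hgX]; ring) (fun ⟨i, j⟩ ℓ => by rw [hgY]; ring)]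
  simp only [rosselandDiffusion, sub_add_cancel]
  ring

end Quadrature

theorem full_rank_macro_micro_AP_general
    (Nx Ny Nq : ℕ)
    (Δx Δy Δt c a cν : ℝ)
    (w Ωx Ωy : Fin Nq → ℝ)
    -- quadrature exactness conditions
    (hquadx : ∑ ℓ : Fin Nq, w ℓ * (Ωx ℓ) ^ 2 = 2 * π / 3)
    (hquady : ∑ ℓ : Fin Nq, w ℓ * (Ωy ℓ) ^ 2 = 2 * π / 3)
    (hquadxy : ∑ ℓ : Fin Nq, w ℓ * (Ωx ℓ * Ωy ℓ) = 0)
    -- unknowns at time levels n (suffix 0) and n+1 (suffix 1)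
    (gX1 gY1 : ZMod Nx × ZMod Ny → Fin Nq → ℝ)
    (hC1 TC0 TC1 TK0 : ZMod Nx × ZMod Ny → ℝ)
    -- cross sections
    (σtX σtY σaC : ZMod Nx × ZMod Ny → ℝ)
    -- (1) limit micro equation at every x-interface and every ℓ
    (hgX : ∀ i : ZMod Nx, ∀ j : ZMod Ny, ∀ ℓ : Fin Nq,
      gX1 (i, j) ℓ = -(1 / σtX (i, j)) *
        (Ωx ℓ * ((a * c / (2 * π) * (TC0 (i + 1, j)) ^ 4
                  - a * c / (2 * π) * (TC0 (i, j)) ^ 4) / Δx)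
         + Ωy ℓ * ((a * c / (2 * π) * (TK0 (i, j)) ^ 4
                  - a * c / (2 * π) * (TK0 (i, j - 1)) ^ 4) / Δy)))
    -- (2) limit micro equation at every y-interface and every ℓ
    (hgY : ∀ i : ZMod Nx, ∀ j : ZMod Ny, ∀ ℓ : Fin Nq,
      gY1 (i, j) ℓ = -(1 / σtY (i, j)) *
        (Ωx ℓ * ((a * c / (2 * π) * (TK0 (i, j)) ^ 4
                  - a * c / (2 * π) * (TK0 (i - 1, j)) ^ 4) / Δx)
         + Ωy ℓ * ((a * c / (2 * π) * (TC0 (i, j + 1)) ^ 4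
                  - a * c / (2 * π) * (TC0 (i, j)) ^ 4) / Δy)))
    -- (3) limit scalar-flux equation at every cell center
    (hflux : ∀ i : ZMod Nx, ∀ j : ZMod Ny,
      1 / (c * Δt) * (a * c / (2 * π) * (TC1 (i, j)) ^ 4
                      - a * c / (2 * π) * (TC0 (i, j)) ^ 4)
        + (1 / (2 * π)) * ∑ ℓ : Fin Nq, w ℓ *
            (Ωx ℓ * ((gX1 (i, j) ℓ - gX1 (i - 1, j) ℓ) / Δx)
             + Ωy ℓ * ((gY1 (i, j) ℓ - gY1 (i, j - 1) ℓ) / Δy))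
      = -(σaC (i, j)) * hC1 (i, j))
    -- (4) temperature equation at every cell center
    (hTemp : ∀ i : ZMod Nx, ∀ j : ZMod Ny,
      cν / Δt * (TC1 (i, j) - TC0 (i, j)) = 2 * π * σaC (i, j) * hC1 (i, j)) :
    -- discrete Rosseland diffusion equation at every cell center
    ∀ i : ZMod Nx, ∀ j : ZMod Ny,
      cν / Δt * (TC1 (i, j) - TC0 (i, j))
        + (2 * π / (c * Δt)) * (a * c / (2 * π) * (TC1 (i, j)) ^ 4
                                - a * c / (2 * π) * (TC0 (i, j)) ^ 4)
      = (2 * π / 3) *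
          ((1 / Δx) *
            ((1 / σtX (i, j)) * ((a * c / (2 * π) * (TC0 (i + 1, j)) ^ 4
                                  - a * c / (2 * π) * (TC0 (i, j)) ^ 4) / Δx)
             - (1 / σtX (i - 1, j)) * ((a * c / (2 * π) * (TC0 (i, j)) ^ 4
                                  - a * c / (2 * π) * (TC0 (i - 1, j)) ^ 4) / Δx))
           + (1 / Δy) *
            ((1 / σtY (i, j)) * ((a * c / (2 * π) * (TC0 (i, j + 1)) ^ 4
                                  - a * c / (2 * π) * (TC0 (i, j)) ^ 4) / Δy)
             - (1 / σtY (i, j - 1)) * ((a * c / (2 * π) * (TC0 (i, j)) ^ 4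
                                  - a * c / (2 * π) * (TC0 (i, j - 1)) ^ 4) / Δy))) := by
  intro i j
  set B : ZMod Nx × ZMod Ny → ℝ := fun p => a * c / (2 * π) * TC0 p ^ 4
  have hdiv := sum_mul_divergence_of_limit_flux hquadx hquady hquadxy (BC := B)
    (BK := fun p => a * c / (2 * π) * TK0 p ^ 4) hgX hgY i j
  have hmacro := hflux i j
  rw [hdiv] at hmacro
  have hκ : 1 / (2 * π) * (2 * π / 3) = 1 / 3 := by field_simp
  show _ = 2 * π / 3 * rosselandDiffusion σtX σtY B Δx Δy i j
  linear_combination (2 * π) * hmacro + hTemp i j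
    + 2 * π * rosselandDiffusion σtX σtY B Δx Δy i j * hκ

/-- Asymptotic-preserving property of the full-rank macro–micro scheme:
if the formal `ε → 0` limit equations of the scheme hold, then at every cell center
the discrete Rosseland diffusion equation (5-point centered difference on a staggered
grid with explicit time discretization) holds. -/
theorem full_rank_macro_micro_AP
    (Nx Ny Nq : ℕ) [NeZero Nx] [NeZero Ny]
    (Δx Δy Δt c a cν : ℝ)
    (hΔx : 0 < Δx) (hΔy : 0 < Δy) (hΔt : 0 < Δt)
    (hc : 0 < c) (ha : 0 < a) (hcν : 0 < cν)
    (w Ωx Ωy : Fin Nq → ℝ) (hw : ∀ ℓ, 0 ≤ w ℓ)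
    -- quadrature exactness conditions
    (hquadx : ∑ ℓ : Fin Nq, w ℓ * (Ωx ℓ) ^ 2 = 2 * π / 3)
    (hquady : ∑ ℓ : Fin Nq, w ℓ * (Ωy ℓ) ^ 2 = 2 * π / 3)
    (hquadxy : ∑ ℓ : Fin Nq, w ℓ * (Ωx ℓ * Ωy ℓ) = 0)
    -- unknowns at time levels n (suffix 0) and n+1 (suffix 1)
    (gX0 gX1 gY0 gY1 : ZMod Nx × ZMod Ny → Fin Nq → ℝ)
    (hC0 hC1 TC0 TC1 hK0 hK1 TK0 TK1 : ZMod Nx × ZMod Ny → ℝ)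
    -- cross sections
    (σtX σtY σaC : ZMod Nx × ZMod Ny → ℝ)
    (hσtX : ∀ p, 0 < σtX p) (hσtY : ∀ p, 0 < σtY p) (hσaC : ∀ p, 0 ≤ σaC p)
    -- (1) limit micro equation at every x-interface and every ℓ
    (hgX : ∀ i : ZMod Nx, ∀ j : ZMod Ny, ∀ ℓ : Fin Nq,
      gX1 (i, j) ℓ = -(1 / σtX (i, j)) *
        (Ωx ℓ * ((a * c / (2 * π) * (TC0 (i + 1, j)) ^ 4
                  - a * c / (2 * π) * (TC0 (i, j)) ^ 4) / Δx)
         + Ωy ℓ * ((a * c / (2 * π) * (TK0 (i, j)) ^ 4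
                  - a * c / (2 * π) * (TK0 (i, j - 1)) ^ 4) / Δy)))
    -- (2) limit micro equation at every y-interface and every ℓ
    (hgY : ∀ i : ZMod Nx, ∀ j : ZMod Ny, ∀ ℓ : Fin Nq,
      gY1 (i, j) ℓ = -(1 / σtY (i, j)) *
        (Ωx ℓ * ((a * c / (2 * π) * (TK0 (i, j)) ^ 4
                  - a * c / (2 * π) * (TK0 (i - 1, j)) ^ 4) / Δx)
         + Ωy ℓ * ((a * c / (2 * π) * (TC0 (i, j + 1)) ^ 4
                  - a * c / (2 * π) * (TC0 (i, j)) ^ 4) / Δy)))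
    -- (3) limit scalar-flux equation at every cell center
    (hflux : ∀ i : ZMod Nx, ∀ j : ZMod Ny,
      1 / (c * Δt) * (a * c / (2 * π) * (TC1 (i, j)) ^ 4
                      - a * c / (2 * π) * (TC0 (i, j)) ^ 4)
        + (1 / (2 * π)) * ∑ ℓ : Fin Nq, w ℓ *
            (Ωx ℓ * ((gX1 (i, j) ℓ - gX1 (i - 1, j) ℓ) / Δx)
             + Ωy ℓ * ((gY1 (i, j) ℓ - gY1 (i, j - 1) ℓ) / Δy))
      = -(σaC (i, j)) * hC1 (i, j))
    -- (4) temperature equation at every cell center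
    (hTemp : ∀ i : ZMod Nx, ∀ j : ZMod Ny,
      cν / Δt * (TC1 (i, j) - TC0 (i, j)) = 2 * π * σaC (i, j) * hC1 (i, j)) :
    -- discrete Rosseland diffusion equation at every cell center
    ∀ i : ZMod Nx, ∀ j : ZMod Ny,
      cν / Δt * (TC1 (i, j) - TC0 (i, j))
        + (2 * π / (c * Δt)) * (a * c / (2 * π) * (TC1 (i, j)) ^ 4
                                - a * c / (2 * π) * (TC0 (i, j)) ^ 4)
      = (2 * π / 3) *
          ((1 / Δx) *
            ((1 / σtX (i, j)) * ((a * c / (2 * π) * (TC0 (i + 1, j)) ^ 4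
                                  - a * c / (2 * π) * (TC0 (i, j)) ^ 4) / Δx)
             - (1 / σtX (i - 1, j)) * ((a * c / (2 * π) * (TC0 (i, j)) ^ 4
                                  - a * c / (2 * π) * (TC0 (i - 1, j)) ^ 4) / Δx))
           + (1 / Δy) *
            ((1 / σtY (i, j)) * ((a * c / (2 * π) * (TC0 (i, j + 1)) ^ 4
                                  - a * c / (2 * π) * (TC0 (i, j)) ^ 4) / Δy)
             - (1 / σtY (i, j - 1)) * ((a * c / (2 * π) * (TC0 (i, j)) ^ 4
                                  - a * c / (2 * π) * (TC0 (i, j - 1)) ^ 4) / Δy))) :=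
  full_rank_macro_micro_AP_general Nx Ny Nq Δx Δy Δt c a cν w Ωx Ωy hquadx hquady hquadxy gX1 gY1
    hC1 TC0 TC1 TK0 σtX σtY σaC hgX hgY hflux hTemp
end

section
/- Weighted bound for the one-sided transport bilinear form (Lemma B.6): for all φ, ψ : (ZMod N_x) × (ZMod N_y) → ℝ^{N_q} and every α > 0, | Σ_{(i,j)} Σ_ℓ w_ℓ (Ω⁺_ℓ (D⁺_x φ)(i,j)_ℓ + Ω⁻_ℓ (D⁻_x φ)(i,j)_ℓ) · ψ(i,j)_ℓ · ΔxΔy | ≤ α Σ_{(i,j)} Σ_ℓ w_ℓ (ψ(i,j)_ℓ)² · ΔxΔy + (1/(4α)) Σ_{(i,j)} Σ_ℓ w_ℓ Ω_ℓ² ((D⁺_x φ)(i,j)_ℓ)² · ΔxΔy. -/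
/-!
Each direction ℓ is upwinded: for Ω_ℓ ≥ 0 only the forward difference survives, for Ω_ℓ < 0
only the backward one, and on the periodic grid the backward difference at `p + e_x` is the
forward difference at `p`. After this reindexing every term is `Ω_ℓ (D⁺_x φ) ψ` evaluated at
a permuted grid point, so Young's inequality `|ab| ≤ α b² + a²/(4α)` bounds it termwise, and the
permutation leaves the weighted sum of `ψ²` unchanged.
-/

open Finset

theorem abs_mul_le_mul_sq_add_one_div_mul_sq {α : ℝ} (hα : 0 < α) (a b : ℝ) :
    |a * b| ≤ α * b ^ 2 + 1 / (4 * α) * a ^ 2 := by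
  have hsq : α * b ^ 2 + 1 / (4 * α) * a ^ 2 - |a| * |b| = (|a| - 2 * α * |b|) ^ 2 / (4 * α) := by
    field_simp
    linear_combination (-4 * α ^ 2) * sq_abs b - sq_abs a
  rw [abs_mul, ← sub_nonneg, hsq]
  positivity

theorem abs_sum_mul_comp_perm_le {G : Type*} [Fintype G] (σ : Equiv.Perm G) {c α : ℝ}
    (hc : 0 ≤ c) (hα : 0 < α) (a b : G → ℝ) :
    |∑ p, c * a p * b (σ p)| ≤ α * ∑ p, c * b p ^ 2 + 1 / (4 * α) * ∑ p, c * a p ^ 2 := by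
  have hterm (p : G) :
      |c * a p * b (σ p)| ≤ α * (c * b (σ p) ^ 2) + 1 / (4 * α) * (c * a p ^ 2) := by
    calc |c * a p * b (σ p)| = c * |a p * b (σ p)| := by rw [mul_assoc, abs_mul, abs_of_nonneg hc]
      _ ≤ c * (α * b (σ p) ^ 2 + 1 / (4 * α) * a p ^ 2) :=
          mul_le_mul_of_nonneg_left (abs_mul_le_mul_sq_add_one_div_mul_sq hα _ _) hc
      _ = α * (c * b (σ p) ^ 2) + 1 / (4 * α) * (c * a p ^ 2) := by ring
  calc |∑ p, c * a p * b (σ p)|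
      ≤ ∑ p, (α * (c * b (σ p) ^ 2) + 1 / (4 * α) * (c * a p ^ 2)) :=
        (abs_sum_le_sum_abs _ _).trans (sum_le_sum fun p _ => hterm p)
    _ = α * ∑ p, c * b p ^ 2 + 1 / (4 * α) * ∑ p, c * a p ^ 2 := by
        rw [sum_add_distrib, ← Equiv.sum_comp σ fun p => c * b p ^ 2, mul_sum, mul_sum]

theorem abs_sum_upwind_mul_le {G : Type*} [Fintype G] (σ : Equiv.Perm G) {w Δ α : ℝ}
    (hw : 0 ≤ w) (hΔ : 0 ≤ Δ) (hα : 0 < α) (Ω : ℝ) (X Z ψ : G → ℝ)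
    (hZX : ∀ p, Z (σ p) = X p) :
    |∑ p, w * ((Ω + |Ω|) / 2 * X p + (Ω - |Ω|) / 2 * Z p) * ψ p * Δ|
      ≤ α * ∑ p, w * ψ p ^ 2 * Δ + 1 / (4 * α) * ∑ p, w * Ω ^ 2 * X p ^ 2 * Δ := by
  obtain ⟨τ, hτ⟩ : ∃ τ : Equiv.Perm G,
      ∑ p, w * ((Ω + |Ω|) / 2 * X p + (Ω - |Ω|) / 2 * Z p) * ψ p * Δ
        = ∑ p, (w * Δ) * (Ω * X p) * ψ (τ p) := by
    rcases le_or_gt 0 Ω with hΩ | hΩ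
    · refine ⟨Equiv.refl G, sum_congr rfl fun p _ => ?_⟩
      rw [abs_of_nonneg hΩ, Equiv.refl_apply]
      ring
    · refine ⟨σ, ?_⟩
      rw [← Equiv.sum_comp σ]
      refine sum_congr rfl fun p _ => ?_
      rw [abs_of_neg hΩ, hZX]
      ring
  rw [hτ]
  refine (abs_sum_mul_comp_perm_le τ (mul_nonneg hw hΔ) hα _ ψ).trans_eq ?_
  congr 2 <;> exact sum_congr rfl fun p _ => by ring

/-- Weighted bound for the one-sided transport bilinear form (Lemma B.6). -/
theorem one_sided_transport_bound
    (Nx Ny Nq : ℕ) [NeZero Nx] [NeZero Ny]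
    (Δx Δy : ℝ) (hΔx : 0 < Δx) (hΔy : 0 < Δy)
    (w Ω : Fin Nq → ℝ) (hw : ∀ ℓ, 0 ≤ w ℓ)
    (φ ψ : ZMod Nx × ZMod Ny → Fin Nq → ℝ)
    (α : ℝ) (hα : 0 < α) :
    |∑ p : ZMod Nx × ZMod Ny, ∑ ℓ : Fin Nq,
        w ℓ * ((Ω ℓ + |Ω ℓ|) / 2 * ((φ (p.1 + 1, p.2) ℓ - φ p ℓ) / Δx)
               + (Ω ℓ - |Ω ℓ|) / 2 * ((φ p ℓ - φ (p.1 - 1, p.2) ℓ) / Δx))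
          * ψ p ℓ * (Δx * Δy)|
    ≤ α * ∑ p : ZMod Nx × ZMod Ny, ∑ ℓ : Fin Nq, w ℓ * (ψ p ℓ) ^ 2 * (Δx * Δy)
      + (1 / (4 * α)) * ∑ p : ZMod Nx × ZMod Ny, ∑ ℓ : Fin Nq,
          w ℓ * (Ω ℓ) ^ 2 * (((φ (p.1 + 1, p.2) ℓ - φ p ℓ) / Δx)) ^ 2 * (Δx * Δy) := by
  let shiftX : Equiv.Perm (ZMod Nx × ZMod Ny) := (Equiv.addRight 1).prodCongr (Equiv.refl _)
  have hcomponent (ℓ : Fin Nq) := abs_sum_upwind_mul_le shiftX (hw ℓ) (mul_pos hΔx hΔy).le hα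
    (Ω ℓ) (fun p => (φ (p.1 + 1, p.2) ℓ - φ p ℓ) / Δx)
    (fun p => (φ p ℓ - φ (p.1 - 1, p.2) ℓ) / Δx) (ψ · ℓ)
    fun p => by simp [shiftX, Prod.map]
  refine (congrArg abs sum_comm).trans_le <|
    (abs_sum_le_sum_abs _ _).trans <| (sum_le_sum fun ℓ _ => hcomponent ℓ).trans_eq ?_
  rw [sum_add_distrib, ← mul_sum, ← mul_sum]
  congr 2 <;> exact sum_comm
end

section
/- Quadratic-form bound for the one-sided transport operator (key estimate in the proof of Lemma B.6): for every φ : (ZMod N_x) × (ZMod N_y) → ℝ^{N_q}, Σ_{(i,j)} Σ_ℓ w_ℓ ( Ω⁺_ℓ (D⁺_x φ)(i,j)_ℓ + Ω⁻_ℓ (D⁻_x φ)(i,j)_ℓ )² · ΔxΔy ≤ Σ_{(i,j)} Σ_ℓ w_ℓ Ω_ℓ² ((D⁺_x φ)(i,j)_ℓ)² · ΔxΔy. -/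
open Finset

/-- Quadratic-form bound for the one-sided transport operator
(key estimate in the proof of Lemma B.6). -/
theorem one_sided_transport_quadratic_bound
    (Nx Ny Nq : ℕ) [NeZero Nx] [NeZero Ny]
    (Δx Δy : ℝ) (hΔx : 0 < Δx) (hΔy : 0 < Δy)
    (w Ω : Fin Nq → ℝ) (hw : ∀ ℓ, 0 ≤ w ℓ)
    (φ : ZMod Nx × ZMod Ny → Fin Nq → ℝ) :
    (∑ p : ZMod Nx × ZMod Ny, ∑ ℓ : Fin Nq,
        w ℓ * ((Ω ℓ + |Ω ℓ|) / 2 * ((φ (p.1 + 1, p.2) ℓ - φ p ℓ) / Δx)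
               + (Ω ℓ - |Ω ℓ|) / 2 * ((φ p ℓ - φ (p.1 - 1, p.2) ℓ) / Δx)) ^ 2
          * (Δx * Δy))
    ≤ ∑ p : ZMod Nx × ZMod Ny, ∑ ℓ : Fin Nq,
        w ℓ * (Ω ℓ) ^ 2 * (((φ (p.1 + 1, p.2) ℓ - φ p ℓ) / Δx)) ^ 2 * (Δx * Δy) := by
  conv_lhs => rw [Finset.sum_comm]
  conv_rhs => rw [Finset.sum_comm]
  apply Finset.sum_le_sum
  intro ℓ _
  rcases le_or_gt 0 (Ω ℓ) with h | h
  · apply Finset.sum_le_sum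
    intro p _
    rw [abs_of_nonneg h]
    have : (Ω ℓ + Ω ℓ) / 2 = Ω ℓ := by ring
    rw [this]
    have : (Ω ℓ - Ω ℓ) / 2 = 0 := by ring
    rw [this, zero_mul, add_zero, mul_pow]
    ring_nf
    exact le_refl _
  · rw [abs_of_neg h]
    have h1 : (Ω ℓ + -Ω ℓ) / 2 = 0 := by ring
    have h2 : (Ω ℓ - -Ω ℓ) / 2 = Ω ℓ := by ring
    simp only [h1, h2, zero_mul, zero_add]
    have key : ∑ p : ZMod Nx × ZMod Ny,
        w ℓ * (Ω ℓ * ((φ p ℓ - φ (p.1 - 1, p.2) ℓ) / Δx)) ^ 2 * (Δx * Δy)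
        = ∑ p : ZMod Nx × ZMod Ny,
        w ℓ * (Ω ℓ * ((φ (p.1 + 1, p.2) ℓ - φ p ℓ) / Δx)) ^ 2 * (Δx * Δy) := by
      apply Fintype.sum_equiv
        (Equiv.prodCongr (Equiv.subRight (1 : ZMod Nx)) (Equiv.refl (ZMod Ny)))
      intro p
      simp [Equiv.subRight, sub_add_cancel, Prod.map]
    rw [key]
    apply le_of_eq
    apply Finset.sum_congr rfl
    intro p _
    rw [mul_pow]
    ring
end

section
/- Energy decomposition of the upwind advection term (Lemma B.7, identity part): for all φ, φ' : (ZMod N_x) × (ZMod N_y) → ℝ^{N_q}, Σ_{(i,j)} Σ_ℓ w_ℓ φ'(i,j)_ℓ (ℒ_x φ)(i,j)_ℓ · ΔxΔy = A + B, where A = (Δx/2) Σ_{(i,j)} Σ_ℓ w_ℓ |Ω_ℓ| ((D⁺_x φ')(i,j)_ℓ)² · ΔxΔy and B = − Σ_{(i,j)} Σ_ℓ w_ℓ ( Ω⁺_ℓ (D⁺_x φ')(i,j)_ℓ + Ω⁻_ℓ (D⁻_x φ')(i,j)_ℓ ) · (φ(i,j)_ℓ − φ'(i,j)_ℓ) ·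 ΔxΔy. -/
/-!
Summation by parts on the periodic grid moves each difference quotient from `φ` onto `φ'`,
turning the left side into `-Σ (Ω⁻ D⁻φ' + Ω⁺ D⁺φ') φ`. Comparing with `B`, what remains is
`Σ (Ω⁺ D⁺φ' + Ω⁻ D⁻φ') φ'`, and the discrete energy identities
`Σ g D^±g = ∓ (Δx/2) Σ (D⁺g)²` turn it into `-A`, because `Ω⁺ - Ω⁻ = |Ω|`.
-/

open Finset

section DiffQuot

variable {G K : Type*} [AddCommGroup G] [Fintype G] [Field K]

def fwdDiffQuot (Δ : K) (s : G) (f : G → K) (p : G) : K := (f (p + s) - f p) / Δ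

def bwdDiffQuot (Δ : K) (s : G) (f : G → K) (p : G) : K := (f p - f (p - s)) / Δ

variable (Δ : K) (s : G)

theorem sum_comp_add_right (h : G → K) : ∑ p, h (p + s) = ∑ p, h p :=
  Fintype.sum_equiv (Equiv.addRight s) _ _ fun _ => rfl

theorem sum_comp_add_sub_eq_zero (h : G → K) : ∑ p, (h (p + s) - h p) = 0 := by
  rw [sum_sub_distrib, sum_comp_add_right, sub_self]

theorem sum_mul_fwdDiffQuot (f g : G → K) :
    ∑ p, g p * fwdDiffQuot Δ s f p = -∑ p, bwdDiffQuot Δ s g p * f p := by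
  have hshift : ∑ p, g p * f (p + s) = ∑ p, g (p - s) * f p := by
    simp only [← sum_comp_add_right s (fun p => g (p - s) * f p), add_sub_cancel_right]
  simp only [fwdDiffQuot, bwdDiffQuot, mul_div_assoc', div_mul_eq_mul_div, ← sum_div, mul_sub,
    sub_mul, sum_sub_distrib, hshift]
  ring

theorem sum_mul_bwdDiffQuot (f g : G → K) :
    ∑ p, g p * bwdDiffQuot Δ s f p = -∑ p, fwdDiffQuot Δ s g p * f p := by
  simp only [mul_comm (g _), mul_comm (fwdDiffQuot Δ s g _), sum_mul_fwdDiffQuot, neg_neg]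

theorem sum_mul_fwdDiffQuot_self [NeZero (2 : K)] (g : G → K) :
    ∑ p, g p * fwdDiffQuot Δ s g p = -(Δ / 2 * ∑ p, fwdDiffQuot Δ s g p ^ 2) := by
  have hterm : ∀ p, g p * fwdDiffQuot Δ s g p + Δ / 2 * fwdDiffQuot Δ s g p ^ 2
      = (g (p + s) ^ 2 - g p ^ 2) / (2 * Δ) := by
    intro p
    rcases eq_or_ne Δ 0 with rfl | hΔ
    · simp [fwdDiffQuot]
    · simp only [fwdDiffQuot]
      field_simp
      ring
  rw [eq_neg_iff_add_eq_zero, mul_sum, ← sum_add_distrib, sum_congr rfl fun p _ => hterm p,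
    ← sum_div, sum_comp_add_sub_eq_zero s (fun p => g p ^ 2), zero_div]

theorem sum_mul_bwdDiffQuot_self [NeZero (2 : K)] (g : G → K) :
    ∑ p, g p * bwdDiffQuot Δ s g p = Δ / 2 * ∑ p, fwdDiffQuot Δ s g p ^ 2 := by
  rw [sum_mul_bwdDiffQuot, ← neg_eq_iff_eq_neg.mpr (sum_mul_fwdDiffQuot_self Δ s g)]
  simp only [mul_comm (g _)]

theorem sum_mul_upwind [NeZero (2 : K)] (a b : K) (f g : G → K) :
    ∑ p, g p * (a * fwdDiffQuot Δ s f p + b * bwdDiffQuot Δ s f p)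
      = Δ / 2 * (b - a) * ∑ p, fwdDiffQuot Δ s g p ^ 2
        - ∑ p, (b * fwdDiffQuot Δ s g p + a * bwdDiffQuot Δ s g p) * (f p - g p) := by
  have hlhs : ∑ p, g p * (a * fwdDiffQuot Δ s f p + b * bwdDiffQuot Δ s f p)
      = a * ∑ p, g p * fwdDiffQuot Δ s f p + b * ∑ p, g p * bwdDiffQuot Δ s f p := by
    simp only [mul_sum, ← sum_add_distrib]
    exact sum_congr rfl fun _ _ => by ring
  have hrhs : ∑ p, (b * fwdDiffQuot Δ s g p + a * bwdDiffQuot Δ s g p) * (f p - g p)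
      = b * ∑ p, fwdDiffQuot Δ s g p * f p + a * ∑ p, bwdDiffQuot Δ s g p * f p
        - b * ∑ p, g p * fwdDiffQuot Δ s g p - a * ∑ p, g p * bwdDiffQuot Δ s g p := by
    simp only [mul_sum, ← sum_add_distrib, ← sum_sub_distrib]
    exact sum_congr rfl fun _ _ => by ring
  rw [hlhs, hrhs, sum_mul_fwdDiffQuot, sum_mul_bwdDiffQuot, sum_mul_fwdDiffQuot_self,
    sum_mul_bwdDiffQuot_self]
  ring

theorem sum_weighted_mul_upwind [NeZero (2 : K)] (a b c d : K) (f g : G → K) :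
    ∑ p, c * g p * (a * fwdDiffQuot Δ s f p + b * bwdDiffQuot Δ s f p) * d
      = Δ / 2 * ∑ p, c * (b - a) * fwdDiffQuot Δ s g p ^ 2 * d
        + -∑ p, c * (b * fwdDiffQuot Δ s g p + a * bwdDiffQuot Δ s g p) * (f p - g p) * d := by
  calc _ = c * d * ∑ p, g p * (a * fwdDiffQuot Δ s f p + b * bwdDiffQuot Δ s f p) := by
        rw [mul_sum]
        exact sum_congr rfl fun _ _ => by ring
    _ = c * d * (Δ / 2 * (b - a) * ∑ p, fwdDiffQuot Δ s g p ^ 2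
        - ∑ p, (b * fwdDiffQuot Δ s g p + a * bwdDiffQuot Δ s g p) * (f p - g p)) := by
        rw [sum_mul_upwind]
    _ = _ := by
        simp only [mul_sub, mul_sum, ← sum_neg_distrib, ← sum_sub_distrib, ← sum_add_distrib]
        exact sum_congr rfl fun _ _ => by ring

end DiffQuot

theorem upwind_energy_decomposition_general
    (Nx Ny Nq : ℕ) [NeZero Nx] [NeZero Ny]
    (Δx Δy : ℝ)
    (w Ω : Fin Nq → ℝ)
    (φ φ' : ZMod Nx × ZMod Ny → Fin Nq → ℝ) :
    (∑ p : ZMod Nx × ZMod Ny, ∑ ℓ : Fin Nq,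
        w ℓ * φ' p ℓ *
          ((Ω ℓ - |Ω ℓ|) / 2 * ((φ (p.1 + 1, p.2) ℓ - φ p ℓ) / Δx)
           + (Ω ℓ + |Ω ℓ|) / 2 * ((φ p ℓ - φ (p.1 - 1, p.2) ℓ) / Δx))
          * (Δx * Δy))
    = (Δx / 2) * ∑ p : ZMod Nx × ZMod Ny, ∑ ℓ : Fin Nq,
        w ℓ * |Ω ℓ| * (((φ' (p.1 + 1, p.2) ℓ - φ' p ℓ) / Δx)) ^ 2 * (Δx * Δy)
      + -∑ p : ZMod Nx × ZMod Ny, ∑ ℓ : Fin Nq,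
          w ℓ * ((Ω ℓ + |Ω ℓ|) / 2 * ((φ' (p.1 + 1, p.2) ℓ - φ' p ℓ) / Δx)
                 + (Ω ℓ - |Ω ℓ|) / 2 * ((φ' p ℓ - φ' (p.1 - 1, p.2) ℓ) / Δx))
            * (φ p ℓ - φ' p ℓ) * (Δx * Δy) := by
  have hfwd : ∀ p : ZMod Nx × ZMod Ny, (p.1 + 1, p.2) = p + (1, 0) := fun p => by ext <;> simp
  have hbwd : ∀ p : ZMod Nx × ZMod Ny, (p.1 - 1, p.2) = p - (1, 0) := fun p => by ext <;> simp
  simp only [hfwd, hbwd, sum_comm (s := (univ : Finset (ZMod Nx × ZMod Ny)))]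
  rw [mul_sum, ← sum_neg_distrib, ← sum_add_distrib]
  refine sum_congr rfl fun ℓ _ => ?_
  have habs : (Ω ℓ + |Ω ℓ|) / 2 - (Ω ℓ - |Ω ℓ|) / 2 = |Ω ℓ| := by ring
  have hupwind := sum_weighted_mul_upwind Δx ((1, 0) : ZMod Nx × ZMod Ny)
    ((Ω ℓ - |Ω ℓ|) / 2) ((Ω ℓ + |Ω ℓ|) / 2) (w ℓ) (Δx * Δy) (fun p => φ p ℓ) (fun p => φ' p ℓ)
  rwa [habs] at hupwind

/-- Energy decomposition of the upwind advection term (Lemma B.7, identity part):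
`Σ w_ℓ φ'(p)_ℓ (ℒ_x φ)(p)_ℓ ΔxΔy = A + B` with the numerical-diffusion term `A`
in `φ'` and the cross term `B` in `φ − φ'`. -/
theorem upwind_energy_decomposition
    (Nx Ny Nq : ℕ) [NeZero Nx] [NeZero Ny]
    (Δx Δy : ℝ) (hΔx : 0 < Δx) (hΔy : 0 < Δy)
    (w Ω : Fin Nq → ℝ) (hw : ∀ ℓ, 0 ≤ w ℓ)
    (φ φ' : ZMod Nx × ZMod Ny → Fin Nq → ℝ) :
    (∑ p : ZMod Nx × ZMod Ny, ∑ ℓ : Fin Nq,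
        w ℓ * φ' p ℓ *
          ((Ω ℓ - |Ω ℓ|) / 2 * ((φ (p.1 + 1, p.2) ℓ - φ p ℓ) / Δx)
           + (Ω ℓ + |Ω ℓ|) / 2 * ((φ p ℓ - φ (p.1 - 1, p.2) ℓ) / Δx))
          * (Δx * Δy))
    = (Δx / 2) * ∑ p : ZMod Nx × ZMod Ny, ∑ ℓ : Fin Nq,
        w ℓ * |Ω ℓ| * (((φ' (p.1 + 1, p.2) ℓ - φ' p ℓ) / Δx)) ^ 2 * (Δx * Δy)
      + -∑ p : ZMod Nx × ZMod Ny, ∑ ℓ : Fin Nq,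
          w ℓ * ((Ω ℓ + |Ω ℓ|) / 2 * ((φ' (p.1 + 1, p.2) ℓ - φ' p ℓ) / Δx)
                 + (Ω ℓ - |Ω ℓ|) / 2 * ((φ' p ℓ - φ' (p.1 - 1, p.2) ℓ) / Δx))
            * (φ p ℓ - φ' p ℓ) * (Δx * Δy) :=
  upwind_energy_decomposition_general Nx Ny Nq Δx Δy w Ω φ φ'
end

section
/- Lower bound on the cross term in the energy decomposition of the upwind advection term (Lemma B.7, bound part): for all φ, φ' : (ZMod N_x) × (ZMod N_y) → ℝ^{N_q} and all positive reals ε, c, Δt, the quantity B := − Σ_{(i,j)} Σ_ℓ w_ℓ ( Ω⁺_ℓ (D⁺_x φ')(i,j)_ℓ + Ω⁻_ℓ (D⁻_x φ')(i,j)_ℓ ) · (φ(i,j)_ℓ − φ'(i,j)_ℓ) · ΔxΔy satisfies B ≥ −(ε/(4cΔt)) Σ_{(i,j)} Σ_ℓ w_ℓ (φ(i,j)_ℓ − φ'(i,j)_ℓ)² · ΔxΔy − (cΔt/ε) Σ_{(i,j)} Σ_ℓ w_ℓ Ω_ℓ² ((D⁺_x φ')(i,j)_ℓ)² · ΔxΔy.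 -/
/-!
With `u = φ - φ'` and `d` the forward difference of `φ'`, the backward difference is `d` shifted
by one cell, so each summand is `(Ω⁺ d(p) + Ω⁻ d(p - e₁)) u(p)`. Young's inequality with
weights `ε/(4cΔt)` and `cΔt/ε` bounds it by `ε/(4cΔt) u(p)² + cΔt/ε (Ω⁺ d(p) + Ω⁻ d(p - e₁))²`.
Since `Ω⁺ Ω⁻ = 0` the square splits as `Ω⁺² d(p)² + Ω⁻² d(p - e₁)²`; after summing, periodicity
undoes the shift and `Ω⁺² + Ω⁻² = Ω²`.
-/

open Finset

lemma mul_le_mul_sq_add_mul_sq {K M : ℝ} (hK : 0 ≤ K) (hKM : 4 * K * M = 1) (a u : ℝ) :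
    a * u ≤ K * u ^ 2 + M * a ^ 2 := by
  have key : K * (u - 2 * M * a) ^ 2 = K * u ^ 2 + M * a ^ 2 - a * u := by
    linear_combination (M * a ^ 2 - a * u) * hKM
  nlinarith [mul_nonneg hK (sq_nonneg (u - 2 * M * a))]

lemma upwind_split_sq (Ω a b : ℝ) :
    ((Ω + |Ω|) / 2 * a + (Ω - |Ω|) / 2 * b) ^ 2
      = ((Ω + |Ω|) / 2) ^ 2 * a ^ 2 + ((Ω - |Ω|) / 2) ^ 2 * b ^ 2 := by
  linear_combination -(a * b / 2) * sq_abs Ω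

lemma upwind_sq_add_sq (Ω : ℝ) : ((Ω + |Ω|) / 2) ^ 2 + ((Ω - |Ω|) / 2) ^ 2 = Ω ^ 2 := by
  linear_combination sq_abs Ω / 2

lemma upwind_young {K M : ℝ} (hK : 0 ≤ K) (hKM : 4 * K * M = 1) (Ω a b u : ℝ) :
    ((Ω + |Ω|) / 2 * a + (Ω - |Ω|) / 2 * b) * u
      ≤ K * u ^ 2 + M * (((Ω + |Ω|) / 2) ^ 2 * a ^ 2 + ((Ω - |Ω|) / 2) ^ 2 * b ^ 2) := by
  rw [← upwind_split_sq]
  exact mul_le_mul_sq_add_mul_sq hK hKM _ u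

lemma Fintype.sum_prod_sub_fst {G H M : Type*} [AddGroup G] [Fintype G] [Fintype H]
    [AddCommMonoid M] (g : G × H → M) (a : G) :
    ∑ p : G × H, g (p.1 - a, p.2) = ∑ p, g p :=
  Fintype.sum_equiv ((Equiv.subRight a).prodCongr (Equiv.refl H)) _ _ fun _ => rfl

lemma sum_upwind_sq_shift {G H ι : Type*} [AddGroup G] [Fintype G] [Fintype H] [Fintype ι]
    (v Ω : ι → ℝ) (d : G × H → ι → ℝ) (a : G) :
    ∑ p : G × H, ∑ ℓ, v ℓ * (((Ω ℓ + |Ω ℓ|) / 2) ^ 2 * d p ℓ ^ 2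
        + ((Ω ℓ - |Ω ℓ|) / 2) ^ 2 * d (p.1 - a, p.2) ℓ ^ 2)
      = ∑ p : G × H, ∑ ℓ, v ℓ * Ω ℓ ^ 2 * d p ℓ ^ 2 := by
  simp only [mul_add, sum_add_distrib]
  rw [Fintype.sum_prod_sub_fst (fun q => ∑ ℓ, v ℓ * (((Ω ℓ - |Ω ℓ|) / 2) ^ 2 * d q ℓ ^ 2)),
    ← sum_add_distrib]
  refine sum_congr rfl fun p _ => ?_
  rw [← sum_add_distrib]
  refine sum_congr rfl fun ℓ _ => ?_
  rw [← upwind_sq_add_sq (Ω ℓ)]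
  ring

/-- Lower bound on the cross term in the energy decomposition of the upwind advection
term (Lemma B.7, bound part). -/
theorem upwind_cross_term_lower_bound
    (Nx Ny Nq : ℕ) [NeZero Nx] [NeZero Ny]
    (Δx Δy : ℝ) (hΔx : 0 < Δx) (hΔy : 0 < Δy)
    (w Ω : Fin Nq → ℝ) (hw : ∀ ℓ, 0 ≤ w ℓ)
    (φ φ' : ZMod Nx × ZMod Ny → Fin Nq → ℝ)
    (ε c Δt : ℝ) (hε : 0 < ε) (hc : 0 < c) (hΔt : 0 < Δt) :
    -∑ p : ZMod Nx × ZMod Ny, ∑ ℓ : Fin Nq,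
        w ℓ * ((Ω ℓ + |Ω ℓ|) / 2 * ((φ' (p.1 + 1, p.2) ℓ - φ' p ℓ) / Δx)
               + (Ω ℓ - |Ω ℓ|) / 2 * ((φ' p ℓ - φ' (p.1 - 1, p.2) ℓ) / Δx))
          * (φ p ℓ - φ' p ℓ) * (Δx * Δy)
    ≥ -(ε / (4 * c * Δt)) * ∑ p : ZMod Nx × ZMod Ny, ∑ ℓ : Fin Nq,
          w ℓ * (φ p ℓ - φ' p ℓ) ^ 2 * (Δx * Δy)
      - (c * Δt / ε) * ∑ p : ZMod Nx × ZMod Ny, ∑ ℓ : Fin Nq,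
          w ℓ * (Ω ℓ) ^ 2 * (((φ' (p.1 + 1, p.2) ℓ - φ' p ℓ) / Δx)) ^ 2 * (Δx * Δy) := by
  set K := ε / (4 * c * Δt)
  set M := c * Δt / ε
  set d : ZMod Nx × ZMod Ny → Fin Nq → ℝ := fun p ℓ => (φ' (p.1 + 1, p.2) ℓ - φ' p ℓ) / Δx
  have hKM : 4 * K * M = 1 := by simp only [K, M]; field_simp
  have hback : ∀ p ℓ, (φ' p ℓ - φ' (p.1 - 1, p.2) ℓ) / Δx = d (p.1 - 1, p.2) ℓ := by
    simp [d]
  have hpoint : ∀ p ℓ,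
      w ℓ * ((Ω ℓ + |Ω ℓ|) / 2 * d p ℓ + (Ω ℓ - |Ω ℓ|) / 2 * d (p.1 - 1, p.2) ℓ)
          * (φ p ℓ - φ' p ℓ) * (Δx * Δy)
        ≤ K * (w ℓ * (φ p ℓ - φ' p ℓ) ^ 2 * (Δx * Δy))
          + M * (w ℓ * (Δx * Δy) * (((Ω ℓ + |Ω ℓ|) / 2) ^ 2 * d p ℓ ^ 2
            + ((Ω ℓ - |Ω ℓ|) / 2) ^ 2 * d (p.1 - 1, p.2) ℓ ^ 2)) := by
    intro p ℓ
    have hwA : 0 ≤ w ℓ * (Δx * Δy) := mul_nonneg (hw ℓ) (by positivity)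
    have := mul_le_mul_of_nonneg_left
      (upwind_young (by positivity) hKM (Ω ℓ) (d p ℓ) (d (p.1 - 1, p.2) ℓ) (φ p ℓ - φ' p ℓ)) hwA
    linarith
  have hsum := sum_le_sum fun p (_ : p ∈ univ) => sum_le_sum fun ℓ (_ : ℓ ∈ univ) => hpoint p ℓ
  simp only [sum_add_distrib, ← mul_sum, sum_upwind_sq_shift] at hsum
  simp only [hback]
  have hA : ∀ p ℓ, w ℓ * (Δx * Δy) * Ω ℓ ^ 2 * d p ℓ ^ 2
      = w ℓ * Ω ℓ ^ 2 * d p ℓ ^ 2 * (Δx * Δy) := fun _ _ => by ring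
  simp only [hA] at hsum
  linarith
end

section
/- Dissipativity identity of the upwind advection operator (established in the proof of Lemma B.7): for every φ : (ZMod N_x) × (ZMod N_y) → ℝ^{N_q}, Σ_{(i,j)} Σ_ℓ w_ℓ φ(i,j)_ℓ (ℒ_x φ)(i,j)_ℓ · ΔxΔy = (Δx/2) Σ_{(i,j)} Σ_ℓ w_ℓ |Ω_ℓ| ((D⁺_x φ)(i,j)_ℓ)² · ΔxΔy. -/
open Finset

/-!
Summation by parts on the periodic grid: shifting the summation index turns the backward
difference into a forward one, and `2a(b - a) = (b² - a²) - (b - a)²` while the sum of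
`b² - a²` over a period telescopes to zero. The upwind coefficients differ by `Ω⁺ - Ω⁻ = |Ω|`,
which leaves exactly the numerical dissipation `|Ω| Δx / 2 ‖D⁺φ‖²`.
-/

section PeriodicSummationByParts

variable {ι R : Type*} [Fintype ι] [CommRing R] (σ : ι ≃ ι) (u : ι → R)

theorem two_mul_sum_mul_forward_diff :
    2 * ∑ i, u i * (u (σ i) - u i) = -∑ i, (u (σ i) - u i) ^ 2 := by
  calc 2 * ∑ i, u i * (u (σ i) - u i)
      = ∑ i, (u (σ i) ^ 2 - u i ^ 2 - (u (σ i) - u i) ^ 2) := by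
        rw [mul_sum]; exact sum_congr rfl fun i _ => by ring
    _ = -∑ i, (u (σ i) - u i) ^ 2 := by
        rw [sum_sub_distrib, sum_sub_distrib, Equiv.sum_comp σ (fun i => u i ^ 2)]; ring

theorem two_mul_sum_mul_backward_diff :
    2 * ∑ i, u i * (u i - u (σ.symm i)) = ∑ i, (u (σ i) - u i) ^ 2 := by
  calc 2 * ∑ i, u i * (u i - u (σ.symm i))
      = 2 * ∑ i, u (σ i) * (u (σ i) - u i) := by
        rw [← Equiv.sum_comp σ]; simp only [Equiv.symm_apply_apply]
    _ = ∑ i, (u (σ i) ^ 2 - u i ^ 2 + (u (σ i) - u i) ^ 2) := by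
        rw [mul_sum]; exact sum_congr rfl fun i _ => by ring
    _ = ∑ i, (u (σ i) - u i) ^ 2 := by
        rw [sum_add_distrib, sum_sub_distrib, Equiv.sum_comp σ (fun i => u i ^ 2)]; ring

theorem two_mul_sum_mul_upwind (c₁ c₂ : R) :
    2 * ∑ i, u i * (c₁ * (u (σ i) - u i) + c₂ * (u i - u (σ.symm i)))
      = (c₂ - c₁) * ∑ i, (u (σ i) - u i) ^ 2 := by
  have hsplit : ∑ i, u i * (c₁ * (u (σ i) - u i) + c₂ * (u i - u (σ.symm i)))
      = c₁ * ∑ i, u i * (u (σ i) - u i) + c₂ * ∑ i, u i * (u i - u (σ.symm i)) := by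
    rw [mul_sum, mul_sum, ← sum_add_distrib]; exact sum_congr rfl fun i _ => by ring
  linear_combination c₁ * two_mul_sum_mul_forward_diff σ u
    + c₂ * two_mul_sum_mul_backward_diff σ u + 2 * hsplit

end PeriodicSummationByParts

theorem upwind_dissipativity_identity_general
    (Nx Ny Nq : ℕ) [NeZero Nx] [NeZero Ny]
    (Δx Δy : ℝ) (hΔx : 0 < Δx)
    (w Ω : Fin Nq → ℝ)
    (φ : ZMod Nx × ZMod Ny → Fin Nq → ℝ) :
    (∑ p : ZMod Nx × ZMod Ny, ∑ ℓ : Fin Nq,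
        w ℓ * φ p ℓ *
          ((Ω ℓ - |Ω ℓ|) / 2 * ((φ (p.1 + 1, p.2) ℓ - φ p ℓ) / Δx)
           + (Ω ℓ + |Ω ℓ|) / 2 * ((φ p ℓ - φ (p.1 - 1, p.2) ℓ) / Δx))
          * (Δx * Δy))
    = (Δx / 2) * ∑ p : ZMod Nx × ZMod Ny, ∑ ℓ : Fin Nq,
        w ℓ * |Ω ℓ| * (((φ (p.1 + 1, p.2) ℓ - φ p ℓ) / Δx)) ^ 2 * (Δx * Δy) := by
  set σ : ZMod Nx × ZMod Ny ≃ ZMod Nx × ZMod Ny := (Equiv.addRight 1).prodCongr (Equiv.refl _)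
  have hσ (p : ZMod Nx × ZMod Ny) : σ p = (p.1 + 1, p.2) := rfl
  have hσ_symm (p : ZMod Nx × ZMod Ny) : σ.symm p = (p.1 - 1, p.2) := by
    simp [σ, sub_eq_add_neg]; rfl
  have hΔx' : Δx ≠ 0 := hΔx.ne'
  rw [sum_comm]
  conv_rhs => rw [sum_comm, mul_sum]
  refine sum_congr rfl fun ℓ _ => ?_
  have hparts := two_mul_sum_mul_upwind σ (fun p => φ p ℓ) ((Ω ℓ - |Ω ℓ|) / 2) ((Ω ℓ + |Ω ℓ|) / 2)
  simp only [hσ, hσ_symm] at hparts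
  calc _ = w ℓ * Δy / 2 * (2 * ∑ p : ZMod Nx × ZMod Ny, φ p ℓ *
          ((Ω ℓ - |Ω ℓ|) / 2 * (φ (p.1 + 1, p.2) ℓ - φ p ℓ)
            + (Ω ℓ + |Ω ℓ|) / 2 * (φ p ℓ - φ (p.1 - 1, p.2) ℓ))) := by
        rw [← mul_assoc, mul_sum]; refine sum_congr rfl fun p _ => ?_; field_simp
    _ = w ℓ * Δy / 2 * |Ω ℓ| * ∑ p : ZMod Nx × ZMod Ny, (φ (p.1 + 1, p.2) ℓ - φ p ℓ) ^ 2 := by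
        rw [hparts]; ring
    _ = _ := by
        rw [mul_sum, mul_sum]; refine sum_congr rfl fun p _ => ?_; field_simp

/-- Dissipativity identity of the upwind advection operator
(established in the proof of Lemma B.7). -/
theorem upwind_dissipativity_identity
    (Nx Ny Nq : ℕ) [NeZero Nx] [NeZero Ny]
    (Δx Δy : ℝ) (hΔx : 0 < Δx) (hΔy : 0 < Δy)
    (w Ω : Fin Nq → ℝ) (hw : ∀ ℓ, 0 ≤ w ℓ)
    (φ : ZMod Nx × ZMod Ny → Fin Nq → ℝ) :
    (∑ p : ZMod Nx × ZMod Ny, ∑ ℓ : Fin Nq,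
        w ℓ * φ p ℓ *
          ((Ω ℓ - |Ω ℓ|) / 2 * ((φ (p.1 + 1, p.2) ℓ - φ p ℓ) / Δx)
           + (Ω ℓ + |Ω ℓ|) / 2 * ((φ p ℓ - φ (p.1 - 1, p.2) ℓ) / Δx))
          * (Δx * Δy))
    = (Δx / 2) * ∑ p : ZMod Nx × ZMod Ny, ∑ ℓ : Fin Nq,
        w ℓ * |Ω ℓ| * (((φ (p.1 + 1, p.2) ℓ - φ p ℓ) / Δx)) ^ 2 * (Δx * Δy) :=
  upwind_dissipativity_identity_general Nx Ny Nq Δx Δy hΔx w Ω φ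
end
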